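/- arXiv:math/0505374 — 3 statements merged into one kernel-verified Lean document; each statement's English description precedes it below -/
import Mathlib

section
/- The Mills' ratio M(y) = y · Φ̄(y) / φ(y) is monotonically increasing on (0, ∞), tends to 0 as y → 0⁺, and tends to 1 as y → ∞. -/
open MeasureTheory Set

/-- Standard Gaussian density. -/
noncomputable def gphi (v : ℝ) : ℝ := (Real.sqrt (2 * Real.pi))⁻¹ * Real.exp (-v ^ 2 / 2)

/-- Standard Gaussian upper tail probability. -/
noncomputable def PhiBar (v : ℝ) : ℝ := ∫ x in Set.Ioi v, gphi x

/-- Standard Gaussian CDF. -/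
noncomputable def Phi (v : ℝ) : ℝ := ∫ x in Set.Iic v, gphi x

/-!
Since `φ' = -y φ`, the tail integrals `∫_y^∞ x φ(x) dx = φ(y)` and
`∫_y^∞ (1 + x⁻²) φ(x) dx = φ(y) / y` are explicit. Comparing them with `Φ̄(y) = ∫_y^∞ φ` gives
the Mills bounds `y Φ̄(y) ≤ φ(y)` and, for `y > 0`, `y φ(y) < (1 + y²) Φ̄(y)`. The latter says exactly
that `M' = ((1 + y²) Φ̄ - y φ) / φ` is positive; together the two squeeze `M(y)` between
`y² / (1 + y²)` and `1`. Finally `M` is continuous with `M(0) = 0`.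
-/

open Filter Topology

lemma setIntegral_lt_setIntegral_of_forall_lt {X : Type*} [MeasurableSpace X] {μ : Measure X}
    {s : Set X} {f g : X → ℝ} (hs : MeasurableSet s) (hμs : μ s ≠ 0)
    (hf : IntegrableOn f s μ) (hg : IntegrableOn g s μ) (hlt : ∀ x ∈ s, f x < g x) :
    ∫ x in s, f x ∂μ < ∫ x in s, g x ∂μ := by
  rw [← sub_pos, ← integral_sub hg hf]
  refine (setIntegral_pos_iff_support_of_nonneg_ae (f := fun x => g x - f x) ?_ (hg.sub hf)).2 ?_
  · filter_upwards [ae_restrict_mem hs] with x hx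
    exact (sub_pos.2 (hlt x hx)).le
  · have hsupp : s ⊆ Function.support fun x => g x - f x := fun x hx =>
      Function.mem_support.2 (sub_pos.2 (hlt x hx)).ne'
    rw [inter_eq_self_of_subset_right hsupp]
    exact pos_iff_ne_zero.2 hμs

lemma gphi_pos (v : ℝ) : 0 < gphi v := by
  unfold gphi; positivity

lemma continuous_gphi : Continuous gphi := by
  unfold gphi; fun_prop

lemma hasDerivAt_gphi (y : ℝ) : HasDerivAt gphi (-y * gphi y) y := by
  have h : HasDerivAt (fun v : ℝ => -v ^ 2 / 2) (-y) y :=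
    ((hasDerivAt_pow 2 y).neg.div_const 2).congr_deriv (by ring)
  exact (h.exp.const_mul _).congr_deriv (by unfold gphi; ring)

lemma tendsto_gphi_atTop : Tendsto gphi atTop (𝓝 0) := by
  have h : Tendsto (fun v : ℝ => -v ^ 2 / 2) atTop atBot := by
    simpa [neg_div] using (tendsto_pow_atTop two_ne_zero).atTop_div_const (zero_lt_two' ℝ)
  rw [← mul_zero (Real.sqrt (2 * Real.pi))⁻¹]
  exact (Real.tendsto_exp_atBot.comp h).const_mul _

lemma gphi_eq_mul_exp :
    gphi = fun v => (Real.sqrt (2 * Real.pi))⁻¹ * Real.exp (-(1 / 2) * v ^ 2) := by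
  ext v; unfold gphi; ring_nf

lemma integrable_gphi : Integrable gphi := by
  rw [gphi_eq_mul_exp]
  exact (integrable_exp_neg_mul_sq one_half_pos).const_mul _

lemma integrable_mul_gphi : Integrable fun x => x * gphi x := by
  simpa only [gphi_eq_mul_exp, mul_left_comm] using
    (integrable_mul_exp_neg_mul_sq (one_half_pos (α := ℝ))).const_mul (Real.sqrt (2 * Real.pi))⁻¹

lemma integral_Ioi_mul_gphi (y : ℝ) : ∫ x in Ioi y, x * gphi x = gphi y := by
  have hderiv (x : ℝ) : HasDerivAt (fun v => -gphi v) (x * gphi x) x :=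
    (hasDerivAt_gphi x).neg.congr_deriv (by ring)
  rw [integral_Ioi_of_hasDerivAt_of_tendsto' (fun x _ => hderiv x) integrable_mul_gphi.integrableOn
    (m := 0) (by simpa using tendsto_gphi_atTop.neg)]
  ring

lemma hasDerivAt_neg_gphi_div {x : ℝ} (hx : x ≠ 0) :
    HasDerivAt (fun v => -(gphi v / v)) ((1 + x⁻¹ ^ 2) * gphi x) x := by
  refine ((hasDerivAt_gphi x).div (hasDerivAt_id' x) hx).neg.congr_deriv ?_
  field_simp
  ring

lemma tendsto_neg_gphi_div_atTop : Tendsto (fun v => -(gphi v / v)) atTop (𝓝 0) := by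
  simpa [div_eq_mul_inv] using (tendsto_gphi_atTop.mul tendsto_inv_atTop_zero).neg

lemma integrableOn_Ioi_one_add_inv_sq_mul_gphi {y : ℝ} (hy : 0 < y) :
    IntegrableOn (fun x => (1 + x⁻¹ ^ 2) * gphi x) (Ioi y) :=
  integrableOn_Ioi_deriv_of_nonneg' (fun x hx => hasDerivAt_neg_gphi_div (hy.trans_le hx).ne')
    (fun x _ => by have := gphi_pos x; positivity) tendsto_neg_gphi_div_atTop

lemma integral_Ioi_one_add_inv_sq_mul_gphi {y : ℝ} (hy : 0 < y) :
    ∫ x in Ioi y, (1 + x⁻¹ ^ 2) * gphi x = gphi y / y := by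
  simpa using integral_Ioi_of_hasDerivAt_of_nonneg'
    (fun x hx => hasDerivAt_neg_gphi_div (hy.trans_le hx).ne')
    (fun x _ => by have := gphi_pos x; positivity) tendsto_neg_gphi_div_atTop

lemma PhiBar_eq_sub_integral (y : ℝ) : PhiBar y = PhiBar 0 - ∫ x in (0 : ℝ)..y, gphi x := by
  rw [← intervalIntegral.integral_Ioi_sub_Ioi' integrable_gphi.integrableOn
    integrable_gphi.integrableOn, PhiBar, PhiBar]
  ring

lemma hasDerivAt_PhiBar (y : ℝ) : HasDerivAt PhiBar (-gphi y) y := by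
  rw [show PhiBar = fun y => PhiBar 0 - ∫ x in (0 : ℝ)..y, gphi x from funext PhiBar_eq_sub_integral]
  simpa using ((continuous_gphi.integral_hasStrictDerivAt 0 y).hasDerivAt.const_sub (PhiBar 0))

lemma continuous_PhiBar : Continuous PhiBar :=
  continuous_iff_continuousAt.2 fun y => (hasDerivAt_PhiBar y).continuousAt

lemma mul_PhiBar_le_gphi (y : ℝ) : y * PhiBar y ≤ gphi y := by
  rw [PhiBar, ← integral_const_mul, ← integral_Ioi_mul_gphi y]
  exact setIntegral_mono_on (integrable_gphi.integrableOn.const_mul y)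
    integrable_mul_gphi.integrableOn measurableSet_Ioi
    fun x hx => mul_le_mul_of_nonneg_right (le_of_lt hx) (gphi_pos x).le

lemma mul_gphi_lt_one_add_sq_mul_PhiBar {y : ℝ} (hy : 0 < y) :
    y * gphi y < (1 + y ^ 2) * PhiBar y := by
  have htail : gphi y / y < (1 + y⁻¹ ^ 2) * PhiBar y := by
    rw [← integral_Ioi_one_add_inv_sq_mul_gphi hy, PhiBar, ← integral_const_mul]
    refine setIntegral_lt_setIntegral_of_forall_lt measurableSet_Ioi (by simp)
      (integrableOn_Ioi_one_add_inv_sq_mul_gphi hy) (integrable_gphi.integrableOn.const_mul _)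
      fun x hx => mul_lt_mul_of_pos_right ?_ (gphi_pos x)
    have hinv : x⁻¹ < y⁻¹ := inv_strictAnti₀ hy hx
    have hinv_nonneg : 0 ≤ x⁻¹ := inv_nonneg.2 (hy.trans hx).le
    gcongr
  calc y * gphi y = y ^ 2 * (gphi y / y) := by field_simp
    _ < y ^ 2 * ((1 + y⁻¹ ^ 2) * PhiBar y) := by gcongr
    _ = (1 + y ^ 2) * PhiBar y := by field_simp; ring

noncomputable def millsRatio (y : ℝ) : ℝ := y * PhiBar y / gphi y

lemma continuous_millsRatio : Continuous millsRatio :=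
  (continuous_id.mul continuous_PhiBar).div continuous_gphi fun y => (gphi_pos y).ne'

lemma hasDerivAt_millsRatio (y : ℝ) :
    HasDerivAt millsRatio (((1 + y ^ 2) * PhiBar y - y * gphi y) / gphi y) y := by
  refine (((hasDerivAt_id' y).mul (hasDerivAt_PhiBar y)).div (hasDerivAt_gphi y)
    (gphi_pos y).ne').congr_deriv ?_
  have := (gphi_pos y).ne'
  simp only [Pi.mul_apply]
  field_simp
  ring

lemma strictMonoOn_millsRatio : StrictMonoOn millsRatio (Ioi 0) := by
  refine strictMonoOn_of_deriv_pos (convex_Ioi 0) continuous_millsRatio.continuousOn fun y hy => ?_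
  rw [interior_Ioi] at hy
  rw [(hasDerivAt_millsRatio y).deriv]
  exact div_pos (sub_pos.2 (mul_gphi_lt_one_add_sq_mul_PhiBar hy)) (gphi_pos y)

lemma tendsto_millsRatio_nhdsGT_zero : Tendsto millsRatio (𝓝[>] 0) (𝓝 0) := by
  simpa [millsRatio] using (continuous_millsRatio.tendsto 0).mono_left nhdsWithin_le_nhds

lemma millsRatio_le_one (y : ℝ) : millsRatio y ≤ 1 :=
  div_le_one_of_le₀ (mul_PhiBar_le_gphi y) (gphi_pos y).le

lemma sq_div_one_add_sq_lt_millsRatio {y : ℝ} (hy : 0 < y) : y ^ 2 / (1 + y ^ 2) < millsRatio y := by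
  rw [millsRatio, div_lt_div_iff₀ (by positivity) (gphi_pos y)]
  nlinarith [mul_lt_mul_of_pos_left (mul_gphi_lt_one_add_sq_mul_PhiBar hy) hy]

lemma tendsto_millsRatio_atTop : Tendsto millsRatio atTop (𝓝 1) := by
  have hlower : Tendsto (fun y : ℝ => y ^ 2 / (1 + y ^ 2)) atTop (𝓝 1) := by
    have h : Tendsto (fun y : ℝ => (1 + y ^ 2)⁻¹) atTop (𝓝 0) :=
      tendsto_inv_atTop_zero.comp (tendsto_atTop_add_const_left _ 1 (tendsto_pow_atTop two_ne_zero))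
    refine (sub_zero (1 : ℝ) ▸ h.const_sub 1).congr fun y => ?_
    have : (0 : ℝ) < 1 + y ^ 2 := by positivity
    field_simp
    ring
  refine tendsto_of_tendsto_of_tendsto_of_le_of_le' hlower tendsto_const_nhds ?_
    (Eventually.of_forall millsRatio_le_one)
  filter_upwards [eventually_gt_atTop 0] with y hy
  exact (sq_div_one_add_sq_lt_millsRatio hy).le

theorem stmt1 :
    StrictMonoOn (fun y : ℝ => y * PhiBar y / gphi y) (Set.Ioi 0) ∧
    Filter.Tendsto (fun y : ℝ => y * PhiBar y / gphi y) (nhdsWithin 0 (Set.Ioi 0)) (nhds 0) ∧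
    Filter.Tendsto (fun y : ℝ => y * PhiBar y / gphi y) Filter.atTop (nhds 1) :=
  ⟨strictMonoOn_millsRatio, tendsto_millsRatio_nhdsGT_zero, tendsto_millsRatio_atTop⟩
end

section
/- Fix t > u > 0. Then the function μ ↦ sinh(tμ)/sinh(uμ) is monotonically increasing on (0, ∞). -/
/-! The derivative of `sinh (t μ) / sinh (u μ)` has the sign of
`t cosh (t μ) sinh (u μ) - u cosh (u μ) sinh (t μ)`, i.e. of
`(t μ) coth (t μ) - (u μ) coth (u μ)`, which is positive because `x coth x` is strictly increasing
on `(0, ∞)`: its derivative has numerator `sinh x cosh x - x > 0`. -/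

open Real Set

lemma strictMonoOn_of_hasDerivAt_pos {D : Set ℝ} (hD : Convex ℝ D) (hDo : IsOpen D)
    {f f' : ℝ → ℝ} (hf : ∀ x ∈ D, HasDerivAt f (f' x) x) (hf' : ∀ x ∈ D, 0 < f' x) :
    StrictMonoOn f D := by
  rw [← hDo.interior_eq] at hf hf'
  refine strictMonoOn_of_hasDerivWithinAt_pos hD (fun x hx => ?_)
    (fun x hx => (hf x hx).hasDerivWithinAt) hf'
  rw [← hDo.interior_eq] at hx
  exact (hf x hx).continuousAt.continuousWithinAt

lemma strictMonoOn_mul_cosh_div_sinh : StrictMonoOn (fun x => x * cosh x / sinh x) (Ioi 0) := by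
  refine strictMonoOn_of_hasDerivAt_pos (convex_Ioi 0) isOpen_Ioi
    (fun x hx => ((hasDerivAt_id x).mul (hasDerivAt_cosh x)).div (hasDerivAt_sinh x)
      (sinh_pos_iff.2 hx).ne') (fun x (hx : 0 < x) => ?_)
  have h2x : 2 * x < 2 * sinh x * cosh x := sinh_two_mul x ▸ self_lt_sinh_iff.2 (by linarith)
  have hnum : 0 < (1 * cosh x + x * sinh x) * sinh x - x * cosh x * cosh x := by
    nlinarith [cosh_sq_sub_sinh_sq x]
  have := sinh_pos_iff.2 hx
  positivity

lemma mul_cosh_mul_sinh_lt {u t μ : ℝ} (hu : 0 < u) (hut : u < t) (hμ : 0 < μ) :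
    u * cosh (u * μ) * sinh (t * μ) < t * cosh (t * μ) * sinh (u * μ) := by
  have ht : 0 < t := hu.trans hut
  have hmono := strictMonoOn_mul_cosh_div_sinh (mem_Ioi.2 (mul_pos hu hμ))
    (mem_Ioi.2 (mul_pos ht hμ)) (mul_lt_mul_of_pos_right hut hμ)
  rw [div_lt_div_iff₀ (sinh_pos_iff.2 (mul_pos hu hμ)) (sinh_pos_iff.2 (mul_pos ht hμ))]
    at hmono
  have hμ' : μ * (u * cosh (u * μ) * sinh (t * μ)) < μ * (t * cosh (t * μ) * sinh (u * μ)) := by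
    linarith
  exact lt_of_mul_lt_mul_left hμ' hμ.le

lemma hasDerivAt_sinh_const_mul (c x : ℝ) :
    HasDerivAt (fun μ => sinh (c * μ)) (cosh (c * x) * c) x := by
  simpa using ((hasDerivAt_id x).const_mul c).sinh

theorem stmt5 (t u : ℝ) (hu : 0 < u) (hut : u < t) :
    StrictMonoOn (fun μ : ℝ => Real.sinh (t * μ) / Real.sinh (u * μ)) (Set.Ioi 0) := by
  refine strictMonoOn_of_hasDerivAt_pos (convex_Ioi 0) isOpen_Ioi
    (fun μ hμ => (hasDerivAt_sinh_const_mul t μ).div (hasDerivAt_sinh_const_mul u μ)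
      (sinh_pos_iff.2 (mul_pos hu hμ)).ne') (fun μ (hμ : 0 < μ) => ?_)
  have hnum := mul_cosh_mul_sinh_lt hu hut hμ
  have hnum' : 0 < cosh (t * μ) * t * sinh (u * μ) - sinh (t * μ) * (cosh (u * μ) * u) := by
    linarith
  have := sinh_pos_iff.2 (mul_pos hu hμ)
  positivity
end

section
/- Suppose |μ| ≤ t_κ ≤ t̂ and let δ̂ = μ − η_H(y, t̂), δ̄ = μ − η_H(y, t_κ), z = y − μ. Then for every 0 < r ≤ 2 and every real y, |δ̂|^r − |δ̂ + z|^r ≤ |δ̄|^r − |δ̄ + z|^r. -/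
noncomputable def etaH (x t : ℝ) : ℝ := if t ≤ |x| then x else 0

theorem stmt16 (μ tκ that r : ℝ) (hμ : |μ| ≤ tκ) (htt : tκ ≤ that)
    (hr0 : 0 < r) (hr2 : r ≤ 2) :
    ∀ y : ℝ,
      |μ - etaH y that| ^ r - |(μ - etaH y that) + (y - μ)| ^ r ≤
        |μ - etaH y tκ| ^ r - |(μ - etaH y tκ) + (y - μ)| ^ r := by
  intro y
  unfold etaH
  by_cases h1 : that ≤ |y|
  · have h2 : tκ ≤ |y| := le_trans htt h1
    simp [h1, h2]
  · by_cases h2 : tκ ≤ |y|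
    · simp only [h1, h2, if_true, if_false, sub_zero]
      have e1 : μ + (y - μ) = y := by ring
      have e2 : μ - y + (y - μ) = 0 := by ring
      rw [e1, e2, abs_zero, Real.zero_rpow hr0.ne', sub_zero]
      have h3 : |μ| ^ r ≤ |y| ^ r :=
        Real.rpow_le_rpow (abs_nonneg _) (le_trans hμ h2) hr0.le
      have h4 : (0:ℝ) ≤ |μ - y| ^ r := Real.rpow_nonneg (abs_nonneg _) _
      linarith
    · simp [h1, h2]
end
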